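/- (Sample mean and variance from signature terms) Let N ≥ 1 and x₁, …, x_N ∈ ℝ. Define the cumulative sums x̃₀ = 0 and x̃_i = x₁ + ⋯ + x_i, and let Z : [0, 2N] → ℝ² be the lead-lag path of (x̃₀,…,x̃_N): the piecewise linear path through Z_{2i} = (x̃_i, x̃_i) for 0 ≤ i ≤ N and Z_{2i+1} = (x̃_{i+1}, x̃_i) for 0 ≤ i ≤ N−1, linear on each [m, m+1]. Then the empirical mean and variance of the data are linear functions of the signature terms of Z: Mean(x) = (1/N)·Σ_{i=1}^N x_i = (1/N)·S(Z)^1_{0,2N}, and Var(x) = (1/N)·Σ_{i=1}^N x_i² − ((1/N)·Σ_{i=1}^N x_i)² = ((N−1)/N²)·S(Z)^{1,2}_{0,2N} − ((N+1)/N²)·S(Z)^{2,1}_{0,2N}. -/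

import Mathlib

open MeasureTheory

/-- The `k`-fold iterated integral (signature coefficient) of a path
`X : ℝ → (Fin d → ℝ)` over `[a,b]` along the word `w`, defined as the Lebesgue
integral of `∏ i, (X^{w i})'(t i)` over the simplex `a < t₁ < ⋯ < t_k < b`.
For the empty word (`k = 0`) this equals `1` by convention. -/
noncomputable def sigTerm {d : ℕ} (X : ℝ → Fin d → ℝ) (a b : ℝ) {k : ℕ}
    (w : Fin k → Fin d) : ℝ :=
  ∫ t in {t : Fin k → ℝ | StrictMono t ∧ ∀ i, t i ∈ Set.Ioo a b},
    ∏ i, deriv (fun s => X s (w i)) (t i)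


/-- The lead-lag path of a sequence `x₀, x₁, …`: the piecewise linear path in
`ℝ²` through the vertices `Z_{2i} = (x_i, x_i)` and `Z_{2i+1} = (x_{i+1}, x_i)`,
linear on each interval `[m, m+1]` (first coordinate: lead, second: lag). -/
noncomputable def leadLagPath (x : ℕ → ℝ) : ℝ → Fin 2 → ℝ := fun t =>
  ![x ((⌊t⌋₊ + 1) / 2), x (⌊t⌋₊ / 2)] +
    (t - (⌊t⌋₊ : ℝ)) •
      (![x ((⌊t⌋₊ + 2) / 2), x ((⌊t⌋₊ + 1) / 2)] - ![x ((⌊t⌋₊ + 1) / 2), x (⌊t⌋₊ / 2)])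

/-! The lead-lag path is affine on every `[m, m + 1]`, so its derivatives are step functions.
For such a path a level-one term is the sum of the increments and, by Fubini on the triangle
`s < t`, a level-two term is the trapezoid sum
`S^{jk} = ∑ₙ ((Zʲₙ + Zʲₙ₊₁) / 2 - Zʲ₀) (Zᵏₙ₊₁ - Zᵏₙ)`.
Along the lead-lag path only one coordinate moves on each segment, which leaves
`S^{12} = ∑ᵢ x̃ᵢ₊₁ xᵢ₊₁` and `S^{21} = ∑ᵢ x̃ᵢ xᵢ₊₁`: their sum telescopes to `x̃_N²` and their
difference is `∑ᵢ xᵢ₊₁²`, and the variance identity is algebra from there. -/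

open Set

theorem sigTerm_singleton {d : ℕ} (X : ℝ → Fin d → ℝ) {a b : ℝ} (hab : a ≤ b) (j : Fin d) :
    sigTerm X a b ![j] = ∫ t in a..b, deriv (fun s => X s j) t := by
  have hset : (MeasurableEquiv.funUnique (Fin 1) ℝ).symm ⁻¹'
      {t : Fin 1 → ℝ | StrictMono t ∧ ∀ i, t i ∈ Ioo a b} = Ioo a b := by
    ext r
    simp [MeasurableEquiv.funUnique, Subsingleton.strictMono]
  rw [intervalIntegral.integral_of_le hab, integral_Ioc_eq_integral_Ioo, sigTerm]
  erw [← ((volume_preserving_funUnique (Fin 1) ℝ).symm _).setIntegral_preimage_emb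
      (MeasurableEquiv.measurableEmbedding _), hset]
  simp [MeasurableEquiv.funUnique]

theorem setIntegral_triangle_mul {f g : ℝ → ℝ} {a b : ℝ}
    (hf : IntegrableOn f (Ioo a b)) (hg : IntegrableOn g (Ioo a b)) :
    ∫ p in {p : ℝ × ℝ | a < p.1 ∧ p.1 < p.2 ∧ p.2 < b}, f p.1 * g p.2 =
      ∫ t in Ioo a b, (∫ s in Ioo a t, f s) * g t := by
  set T := {p : ℝ × ℝ | a < p.1 ∧ p.1 < p.2 ∧ p.2 < b}
  have hT : MeasurableSet T :=
    (measurableSet_lt measurable_const measurable_fst).inter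
      ((measurableSet_lt measurable_fst measurable_snd).inter
        (measurableSet_lt measurable_snd measurable_const))
  have hint : IntegrableOn (fun p : ℝ × ℝ => f p.1 * g p.2) T (volume.prod volume) := by
    refine IntegrableOn.mono_set (t := Ioo a b ×ˢ Ioo a b) ?_ ?_
    · rw [IntegrableOn, ← Measure.prod_restrict]
      exact hf.mul_prod hg
    · rintro p ⟨h1, h2, h3⟩
      exact ⟨⟨h1, h2.trans h3⟩, ⟨h1.trans h2, h3⟩⟩
  have hslice : ∀ t s, T.indicator (fun p : ℝ × ℝ => f p.1 * g p.2) (s, t) =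
      (Ioo a b).indicator (fun t => (Ioo a t).indicator (fun s => f s * g t) s) t := by
    intro t s
    simp only [indicator, T, mem_ofPred_eq, mem_Ioo]
    split_ifs <;> grind
  rw [Measure.volume_eq_prod, ← integral_indicator hT,
    integral_prod_symm _ (hint.integrable_indicator hT), ← integral_indicator measurableSet_Ioo]
  congr 1
  funext t
  by_cases ht : t ∈ Ioo a b
  · simp only [hslice, indicator_of_mem ht, integral_indicator measurableSet_Ioo,
      integral_mul_const]
  · simp only [hslice, indicator_of_notMem ht, integral_zero]

theorem sigTerm_pair {d : ℕ} (X : ℝ → Fin d → ℝ) {a b : ℝ} (hab : a ≤ b) (j k : Fin d)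
    (hj : IntervalIntegrable (deriv fun s => X s j) volume a b)
    (hk : IntervalIntegrable (deriv fun s => X s k) volume a b) :
    sigTerm X a b ![j, k] =
      ∫ t in a..b, (∫ s in a..t, deriv (fun s => X s j) s) * deriv (fun s => X s k) t := by
  have hset : MeasurableEquiv.finTwoArrow.symm ⁻¹'
      {t : Fin 2 → ℝ | StrictMono t ∧ ∀ i, t i ∈ Ioo a b} =
        {p : ℝ × ℝ | a < p.1 ∧ p.1 < p.2 ∧ p.2 < b} := by
    ext p
    simp [MeasurableEquiv.finTwoArrow, Fin.strictMono_iff_lt_succ, Fin.forall_fin_two]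
    grind
  rw [sigTerm, ← ((volume_preserving_finTwoArrow ℝ).symm _).setIntegral_preimage_emb
      (MeasurableEquiv.measurableEmbedding _), hset]
  simp only [MeasurableEquiv.finTwoArrow_symm_apply, Fin.prod_univ_two, Matrix.cons_val_zero,
    Matrix.cons_val_one, Fin.cons_zero, Fin.cons_one]
  rw [setIntegral_triangle_mul ((intervalIntegrable_iff_integrableOn_Ioo_of_le hab).1 hj)
    ((intervalIntegrable_iff_integrableOn_Ioo_of_le hab).1 hk),
    intervalIntegral.integral_of_le hab, integral_Ioc_eq_integral_Ioo]
  refine setIntegral_congr_fun measurableSet_Ioo fun t ht => ?_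
  rw [intervalIntegral.integral_of_le ht.1.le, integral_Ioc_eq_integral_Ioo]

theorem IntervalIntegrable.of_eqOn_Ioo {f g : ℝ → ℝ} {a b : ℝ} (hab : a ≤ b)
    (hg : IntervalIntegrable g volume a b) (hfg : EqOn f g (Ioo a b)) :
    IntervalIntegrable f volume a b :=
  hg.congr_uIoo (by rw [uIoo_of_le hab]; exact hfg.symm)

section UnitIntervals

variable {f : ℝ → ℝ} {g : ℕ → ℝ → ℝ} {n : ℕ}

theorem intervalIntegrable_of_eqOn_unit_intervals
    (hg : ∀ m < n, IntervalIntegrable (g m) volume m (m + 1))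
    (hfg : ∀ m < n, EqOn f (g m) (Ioo m (m + 1))) :
    IntervalIntegrable f volume 0 n := by
  simpa using IntervalIntegrable.trans_iterate (a := Nat.cast) fun m hm => by
    push_cast
    exact (hg m hm).of_eqOn_Ioo (by linarith) (hfg m hm)

theorem integral_eq_sum_of_eqOn_unit_intervals
    (hg : ∀ m < n, IntervalIntegrable (g m) volume m (m + 1))
    (hfg : ∀ m < n, EqOn f (g m) (Ioo m (m + 1))) :
    ∫ t in (0 : ℝ)..n, f t = ∑ m ∈ Finset.range n, ∫ t in (m : ℝ)..(m + 1), g m t := by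
  rw [← Nat.cast_zero, ← intervalIntegral.sum_integral_adjacent_intervals (a := Nat.cast)
    fun m hm => by push_cast; exact (hg m hm).of_eqOn_Ioo (by linarith) (hfg m hm)]
  refine Finset.sum_congr rfl fun m hm => ?_
  push_cast
  exact intervalIntegral.integral_congr_Ioo_of_le (by linarith) (hfg m (Finset.mem_range.1 hm))

end UnitIntervals

section StepFunction

variable {f : ℝ → ℝ} {c : ℕ → ℝ}

theorem intervalIntegrable_of_step (hf : ∀ m : ℕ, EqOn f (fun _ => c m) (Ioo m (m + 1)))
    (n : ℕ) : IntervalIntegrable f volume 0 n :=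
  intervalIntegrable_of_eqOn_unit_intervals (fun _ _ => intervalIntegrable_const) fun m _ => hf m

theorem integral_of_step (hf : ∀ m : ℕ, EqOn f (fun _ => c m) (Ioo m (m + 1))) (n : ℕ) :
    ∫ t in (0 : ℝ)..n, f t = ∑ m ∈ Finset.range n, c m := by
  rw [integral_eq_sum_of_eqOn_unit_intervals (fun _ _ => intervalIntegrable_const)
    fun m _ => hf m]
  simp

theorem integral_of_step_of_mem_Icc (hf : ∀ m : ℕ, EqOn f (fun _ => c m) (Ioo m (m + 1)))
    {n : ℕ} {t : ℝ} (ht : t ∈ Icc (n : ℝ) (n + 1)) :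
    ∫ s in (0 : ℝ)..t, f s = ∑ m ∈ Finset.range n, c m + (t - n) * c n := by
  have hlast : EqOn f (fun _ => c n) (Ioo n t) :=
    (hf n).mono (Ioo_subset_Ioo_right ht.2)
  rw [← intervalIntegral.integral_add_adjacent_intervals (intervalIntegrable_of_step hf n)
    (intervalIntegrable_const.of_eqOn_Ioo ht.1 hlast), integral_of_step hf,
    intervalIntegral.integral_congr_Ioo_of_le ht.1 hlast]
  simp

end StepFunction

theorem integral_affine_mul_const (a A c d : ℝ) :
    ∫ t in a..a + 1, (A + (t - a) * c) * d = (A + c / 2) * d := by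
  rw [intervalIntegral.integral_comp_sub_right (fun t => (A + t * c) * d)]
  simp [div_eq_inv_mul]

section StepDerivative

variable {d : ℕ} {X : ℝ → Fin d → ℝ} {j k : Fin d} {u v : ℕ → ℝ}

theorem sigTerm_singleton_of_step
    (hj : ∀ m : ℕ, EqOn (deriv fun s => X s j) (fun _ => u m) (Ioo m (m + 1))) (B : ℕ) :
    sigTerm X 0 B ![j] = ∑ m ∈ Finset.range B, u m := by
  rw [sigTerm_singleton X B.cast_nonneg, integral_of_step hj]

theorem sigTerm_pair_of_step
    (hj : ∀ m : ℕ, EqOn (deriv fun s => X s j) (fun _ => u m) (Ioo m (m + 1)))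
    (hk : ∀ m : ℕ, EqOn (deriv fun s => X s k) (fun _ => v m) (Ioo m (m + 1))) (B : ℕ) :
    sigTerm X 0 B ![j, k] = ∑ n ∈ Finset.range B, (∑ m ∈ Finset.range n, u m + u n / 2) * v n := by
  have hpiece : ∀ n : ℕ, EqOn (fun t => (∫ s in (0 : ℝ)..t, deriv (fun s => X s j) s) *
      deriv (fun s => X s k) t)
      (fun t => (∑ m ∈ Finset.range n, u m + (t - n) * u n) * v n) (Ioo n (n + 1)) :=
    fun n t ht => by
      dsimp only
      rw [integral_of_step_of_mem_Icc hj (Ioo_subset_Icc_self ht), hk n ht]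
  rw [sigTerm_pair X B.cast_nonneg j k (intervalIntegrable_of_step hj B)
    (intervalIntegrable_of_step hk B), integral_eq_sum_of_eqOn_unit_intervals
    (fun n _ => by apply Continuous.intervalIntegrable; fun_prop) fun n _ => hpiece n]
  simp only [integral_affine_mul_const]

end StepDerivative

def leadLagVertex (x : ℕ → ℝ) (m : ℕ) : Fin 2 → ℝ := ![x ((m + 1) / 2), x (m / 2)]

theorem deriv_leadLagPath_eqOn (x : ℕ → ℝ) (j : Fin 2) (m : ℕ) :
    EqOn (deriv fun s => leadLagPath x s j)
      (fun _ => leadLagVertex x (m + 1) j - leadLagVertex x m j) (Ioo m (m + 1)) := by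
  intro t ht
  have hloc : (fun s => leadLagPath x s j) =ᶠ[nhds t] fun s =>
      leadLagVertex x m j + (s - m) * (leadLagVertex x (m + 1) j - leadLagVertex x m j) := by
    filter_upwards [Ioo_mem_nhds ht.1 ht.2] with s hs
    rw [leadLagPath, Nat.floor_eq_on_Ico m s (Ioo_subset_Ico_self hs)]
    rfl
  rw [hloc.deriv_eq]
  simp

theorem sigTerm_leadLagPath_singleton (x : ℕ → ℝ) (j : Fin 2) (B : ℕ) :
    sigTerm (leadLagPath x) 0 B ![j] = leadLagVertex x B j - leadLagVertex x 0 j := by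
  rw [sigTerm_singleton_of_step (deriv_leadLagPath_eqOn x j),
    Finset.sum_range_sub (fun m => leadLagVertex x m j)]

theorem sigTerm_leadLagPath_pair (x : ℕ → ℝ) (j k : Fin 2) (B : ℕ) :
    sigTerm (leadLagPath x) 0 B ![j, k] = ∑ n ∈ Finset.range B,
      ((leadLagVertex x n j + leadLagVertex x (n + 1) j) / 2 - leadLagVertex x 0 j) *
        (leadLagVertex x (n + 1) k - leadLagVertex x n k) := by
  rw [sigTerm_pair_of_step (deriv_leadLagPath_eqOn x j) (deriv_leadLagPath_eqOn x k)]
  refine Finset.sum_congr rfl fun n _ => ?_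
  rw [Finset.sum_range_sub (fun m => leadLagVertex x m j)]
  ring

theorem sum_range_two_mul {M : Type*} [AddCommMonoid M] (f : ℕ → M) (n : ℕ) :
    ∑ m ∈ Finset.range (2 * n), f m = ∑ i ∈ Finset.range n, (f (2 * i) + f (2 * i + 1)) := by
  induction n with
  | zero => simp
  | succ n ih => simp [mul_add, Finset.sum_range_succ, ih, add_assoc]

theorem leadLagVertex_two_mul (x : ℕ → ℝ) (i : ℕ) : leadLagVertex x (2 * i) = ![x i, x i] := by
  simp [leadLagVertex, show (2 * i + 1) / 2 = i by omega]

theorem leadLagVertex_two_mul_add_one (x : ℕ → ℝ) (i : ℕ) :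
    leadLagVertex x (2 * i + 1) = ![x (i + 1), x i] := by
  simp [leadLagVertex, show (2 * i + 1 + 1) / 2 = i + 1 by omega,
    show (2 * i + 1) / 2 = i by omega]

theorem leadLagVertex_two_mul_add_two (x : ℕ → ℝ) (i : ℕ) :
    leadLagVertex x (2 * i + 1 + 1) = ![x (i + 1), x (i + 1)] :=
  leadLagVertex_two_mul x (i + 1)

theorem leadLagVertex_zero (x : ℕ → ℝ) : leadLagVertex x 0 = ![x 0, x 0] :=
  leadLagVertex_two_mul x 0

theorem sigTerm_leadLagPath_lead (x : ℕ → ℝ) (N : ℕ) :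
    sigTerm (leadLagPath x) 0 (2 * N) ![0] = x N - x 0 := by
  rw [show (2 * N : ℝ) = (2 * N : ℕ) by push_cast; rfl, sigTerm_leadLagPath_singleton,
    leadLagVertex_two_mul, leadLagVertex_zero]
  simp

theorem sigTerm_leadLagPath_lead_lag (x : ℕ → ℝ) (N : ℕ) :
    sigTerm (leadLagPath x) 0 (2 * N) ![0, 1] =
      ∑ i ∈ Finset.range N, (x (i + 1) - x 0) * (x (i + 1) - x i) := by
  rw [show (2 * N : ℝ) = (2 * N : ℕ) by push_cast; rfl, sigTerm_leadLagPath_pair,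
    sum_range_two_mul]
  refine Finset.sum_congr rfl fun i _ => ?_
  simp [leadLagVertex_two_mul, leadLagVertex_two_mul_add_one, leadLagVertex_two_mul_add_two,
    leadLagVertex_zero]

theorem sigTerm_leadLagPath_lag_lead (x : ℕ → ℝ) (N : ℕ) :
    sigTerm (leadLagPath x) 0 (2 * N) ![1, 0] =
      ∑ i ∈ Finset.range N, (x i - x 0) * (x (i + 1) - x i) := by
  rw [show (2 * N : ℝ) = (2 * N : ℕ) by push_cast; rfl, sigTerm_leadLagPath_pair,
    sum_range_two_mul]
  refine Finset.sum_congr rfl fun i _ => ?_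
  simp [leadLagVertex_two_mul, leadLagVertex_two_mul_add_one, leadLagVertex_two_mul_add_two,
    leadLagVertex_zero]

theorem mean_sq_sub_sq_mean_eq (y : ℕ → ℝ) {N : ℕ} (hN : N ≠ 0) :
    (1 / (N : ℝ)) * ∑ i ∈ Finset.range N, (y (i + 1) - y i) ^ 2 - ((1 / (N : ℝ)) * (y N - y 0)) ^ 2
      = ((N - 1) / (N : ℝ) ^ 2) * ∑ i ∈ Finset.range N, (y (i + 1) - y 0) * (y (i + 1) - y i)
        - ((N + 1) / (N : ℝ) ^ 2) * ∑ i ∈ Finset.range N, (y i - y 0) * (y (i + 1) - y i) := by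
  have hadd : ∑ i ∈ Finset.range N, (y (i + 1) - y 0) * (y (i + 1) - y i)
      + ∑ i ∈ Finset.range N, (y i - y 0) * (y (i + 1) - y i) = (y N - y 0) ^ 2 := by
    rw [← Finset.sum_add_distrib]
    calc _ = ∑ i ∈ Finset.range N, ((y (i + 1) - y 0) ^ 2 - (y i - y 0) ^ 2) :=
          Finset.sum_congr rfl fun i _ => by ring
      _ = _ := by simp [Finset.sum_range_sub fun i => (y i - y 0) ^ 2]
  have hsub : ∑ i ∈ Finset.range N, (y (i + 1) - y 0) * (y (i + 1) - y i)
      - ∑ i ∈ Finset.range N, (y i - y 0) * (y (i + 1) - y i)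
        = ∑ i ∈ Finset.range N, (y (i + 1) - y i) ^ 2 := by
    rw [← Finset.sum_sub_distrib]
    exact Finset.sum_congr rfl fun i _ => by ring
  have hN' : (N : ℝ) ≠ 0 := Nat.cast_ne_zero.2 hN
  rw [show ((N : ℝ) - 1) / N ^ 2 = 1 / N - (1 / N) ^ 2 by field_simp,
    show ((N : ℝ) + 1) / N ^ 2 = 1 / N + (1 / N) ^ 2 by field_simp]
  linear_combination (-(1 / (N : ℝ))) * hsub + (1 / (N : ℝ)) ^ 2 * hadd

/-- Sample mean and variance from signature terms: with `Z` the lead-lag path of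
the cumulative sums `x̃₀ = 0, x̃_i = x₁ + ⋯ + x_i`, the empirical mean of the
data is `(1/N)·S(Z)^1` and the empirical variance is
`((N−1)/N²)·S(Z)^{1,2} − ((N+1)/N²)·S(Z)^{2,1}`. -/
theorem mean_variance_from_signature (N : ℕ) (hN : 1 ≤ N) (x : ℕ → ℝ) :
    let Z := leadLagPath fun i => ∑ j ∈ Finset.range i, x (j + 1)
    (1 / (N : ℝ)) * ∑ i ∈ Finset.range N, x (i + 1)
        = (1 / (N : ℝ)) * sigTerm Z 0 (2 * N) ![0] ∧
    (1 / (N : ℝ)) * ∑ i ∈ Finset.range N, x (i + 1) ^ 2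
        - ((1 / (N : ℝ)) * ∑ i ∈ Finset.range N, x (i + 1)) ^ 2
      = (((N : ℝ) - 1) / (N : ℝ) ^ 2) * sigTerm Z 0 (2 * N) ![0, 1]
        - (((N : ℝ) + 1) / (N : ℝ) ^ 2) * sigTerm Z 0 (2 * N) ![1, 0] := by
  intro Z
  simp only [Z]
  set y : ℕ → ℝ := fun i => ∑ j ∈ Finset.range i, x (j + 1) with hy
  have htotal : ∑ i ∈ Finset.range N, x (i + 1) = y N - y 0 := by simp [hy]
  have hinc : ∀ i, x (i + 1) = y (i + 1) - y i := fun i => by simp [hy, Finset.sum_range_succ]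
  rw [sigTerm_leadLagPath_lead, sigTerm_leadLagPath_lead_lag, sigTerm_leadLagPath_lag_lead,
    htotal]
  refine ⟨rfl, ?_⟩
  simpa only [hinc] using mean_sq_sub_sq_mean_eq y (Nat.one_le_iff_ne_zero.1 hN)
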